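/- Fix θ ∈ (−π/4, π/4) with θ ≠ 0, and in the Lie algebra s = s(θ) let A be the subspace spanned by v_1, v and B the subspace spanned by v_2, v_3, v_4, v. Then s is the central sum of A and B: A is an ideal of s, s = A + B, and A ∩ B is contained in Z(A) ∩ Z(B), where Z(A) and Z(B) denote the centers of the Lie algebras A and B. -/

import Mathlib

noncomputable section

/-!
The Lie algebra `s(θ)` of the Swanson model: the 5-dimensional complex Lie algebra
with basis `v₁, v₂, v₃, v₄, v` and brackets `[v₁,v₂] = [v₃,v₄] = v`,
`[v₁,v₄] = [v₃,v₂] = cos(2θ)·v`, `[v₁,v₃] = [v₄,v₂] = −i·sin(2θ)·v`, `[v,vⱼ] = 0`.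
-/

/-- The underlying vector space of the Swanson Lie algebra `s(θ)`: a pair consisting
of the coordinates along `v₁, v₂, v₃, v₄` and the coordinate along `v`. -/
def SwAlg (_θ : ℝ) : Type := (Fin 4 → ℂ) × ℂ

namespace SwAlg

variable {θ : ℝ}

instance : AddCommGroup (SwAlg θ) := inferInstanceAs (AddCommGroup ((Fin 4 → ℂ) × ℂ))
instance : Module ℂ (SwAlg θ) := inferInstanceAs (Module ℂ ((Fin 4 → ℂ) × ℂ))

/-- The alternating form encoding the structure constants of `s(θ)`. -/
def omega (θ : ℝ) (x y : (Fin 4 → ℂ) × ℂ) : ℂ :=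
  ((x.1 0 * y.1 1 - x.1 1 * y.1 0) + (x.1 2 * y.1 3 - x.1 3 * y.1 2)) +
    (Real.cos (2 * θ) : ℂ) *
      ((x.1 0 * y.1 3 - x.1 3 * y.1 0) + (x.1 2 * y.1 1 - x.1 1 * y.1 2)) +
    (-Complex.I * (Real.sin (2 * θ) : ℂ)) *
      ((x.1 0 * y.1 2 - x.1 2 * y.1 0) + (x.1 3 * y.1 1 - x.1 1 * y.1 3))

/-- The bracket of `s(θ)`: it takes values in the central line spanned by `v`. -/
def br (θ : ℝ) (x y : (Fin 4 → ℂ) × ℂ) : (Fin 4 → ℂ) × ℂ := ((0 : Fin 4 → ℂ), omega θ x y)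

lemma br_add_left (x y z : (Fin 4 → ℂ) × ℂ) : br θ (x + y) z = br θ x z + br θ y z := by
  simp only [br, omega, Prod.mk_add_mk, Prod.fst_add, Pi.add_apply, Prod.mk.injEq]
  constructor
  · simp
  · ring

lemma br_add_right (x y z : (Fin 4 → ℂ) × ℂ) : br θ x (y + z) = br θ x y + br θ x z := by
  simp only [br, omega, Prod.mk_add_mk, Prod.fst_add, Pi.add_apply, Prod.mk.injEq]
  constructor
  · simp
  · ring

lemma br_self (x : (Fin 4 → ℂ) × ℂ) : br θ x x = 0 := by
  simp only [br, omega]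
  have h : (0 : (Fin 4 → ℂ) × ℂ) = ((0 : Fin 4 → ℂ), (0 : ℂ)) := rfl
  rw [h, Prod.mk.injEq]
  constructor
  · rfl
  · ring

lemma br_leibniz (x y z : (Fin 4 → ℂ) × ℂ) :
    br θ x (br θ y z) = br θ (br θ x y) z + br θ y (br θ x z) := by
  simp only [br, omega, Prod.mk_add_mk, Pi.zero_apply, Prod.mk.injEq]
  constructor
  · simp
  · ring

lemma br_smul (c : ℂ) (x y : (Fin 4 → ℂ) × ℂ) : br θ x (c • y) = c • br θ x y := by
  simp only [br, omega, Prod.smul_mk, Prod.smul_fst, Pi.smul_apply, smul_eq_mul, smul_zero]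
  rw [Prod.mk.injEq]
  constructor
  · rfl
  · ring

instance : LieRing (SwAlg θ) where
  bracket x y := br θ x y
  add_lie x y z := br_add_left x y z
  lie_add x y z := br_add_right x y z
  lie_self x := br_self x
  leibniz_lie x y z := br_leibniz x y z

instance : LieAlgebra ℂ (SwAlg θ) where
  lie_smul c x y := br_smul c x y

/-- The basis vector `v₁`. -/
def v1 : SwAlg θ := ((Pi.single 0 1 : Fin 4 → ℂ), (0 : ℂ))
/-- The basis vector `v₂`. -/
def v2 : SwAlg θ := ((Pi.single 1 1 : Fin 4 → ℂ), (0 : ℂ))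
/-- The basis vector `v₃`. -/
def v3 : SwAlg θ := ((Pi.single 2 1 : Fin 4 → ℂ), (0 : ℂ))
/-- The basis vector `v₄`. -/
def v4 : SwAlg θ := ((Pi.single 3 1 : Fin 4 → ℂ), (0 : ℂ))
/-- The central basis vector `v`. -/
def vv : SwAlg θ := ((0 : Fin 4 → ℂ), (1 : ℂ))

end SwAlg

/-!
Every bracket of `s(θ)` is a multiple of the central vector `v`, so any subspace containing `v`
is closed under brackets with arbitrary elements; both `A` and `B` contain `v`, and together they
contain the whole basis. An element of `A ⊓ B` has no `v₁`-coordinate (it lies in `B`) and no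
`v₂, v₃, v₄`-coordinates (it lies in `A`), so it is a multiple of `v` and hence central.
-/

namespace SwAlg

variable {θ : ℝ}

@[simp] lemma fst_add (x y : SwAlg θ) : (x + y).1 = x.1 + y.1 := rfl
@[simp] lemma snd_add (x y : SwAlg θ) : (x + y).2 = x.2 + y.2 := rfl
@[simp] lemma fst_smul (c : ℂ) (x : SwAlg θ) : (c • x).1 = c • x.1 := rfl
@[simp] lemma snd_smul (c : ℂ) (x : SwAlg θ) : (c • x).2 = c • x.2 := rfl

@[simp] lemma v1_fst : (v1 : SwAlg θ).1 = Pi.single 0 1 := rfl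
@[simp] lemma v2_fst : (v2 : SwAlg θ).1 = Pi.single 1 1 := rfl
@[simp] lemma v3_fst : (v3 : SwAlg θ).1 = Pi.single 2 1 := rfl
@[simp] lemma v4_fst : (v4 : SwAlg θ).1 = Pi.single 3 1 := rfl
@[simp] lemma vv_fst : (vv : SwAlg θ).1 = 0 := rfl
@[simp] lemma v1_snd : (v1 : SwAlg θ).2 = 0 := rfl
@[simp] lemma v2_snd : (v2 : SwAlg θ).2 = 0 := rfl
@[simp] lemma v3_snd : (v3 : SwAlg θ).2 = 0 := rfl
@[simp] lemma v4_snd : (v4 : SwAlg θ).2 = 0 := rfl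
@[simp] lemma vv_snd : (vv : SwAlg θ).2 = 1 := rfl

lemma eq_sum_coord_smul_basis (x : SwAlg θ) :
    x = x.1 0 • v1 + (x.1 1 • v2 + x.1 2 • v3 + x.1 3 • v4 + x.2 • vv) := by
  refine Prod.ext (funext fun i => ?_) ?_
  · fin_cases i <;> simp
  · simp

@[simp] lemma fst_lie (x y : SwAlg θ) : ⁅x, y⁆.1 = 0 := rfl
@[simp] lemma snd_lie (x y : SwAlg θ) : ⁅x, y⁆.2 = omega θ x y := rfl

lemma lie_eq_omega_smul_vv (x y : SwAlg θ) : ⁅x, y⁆ = omega θ x y • vv :=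
  Prod.ext (by simp) (by simp)

lemma lie_mem_of_vv_mem {S : Submodule ℂ (SwAlg θ)} (h : vv ∈ S) (x y : SwAlg θ) : ⁅x, y⁆ ∈ S := by
  rw [lie_eq_omega_smul_vv]
  exact S.smul_mem _ h

lemma lie_eq_zero_of_fst_eq_zero {x : SwAlg θ} (hx : x.1 = 0) (y : SwAlg θ) : ⁅x, y⁆ = 0 := by
  rw [lie_eq_omega_smul_vv]
  simp [omega, hx]

/-- The coordinate along `vᵢ₊₁` (indices of `Fin 4` are `0`-based). -/
@[simps]
def coord (i : Fin 4) : SwAlg θ →ₗ[ℂ] ℂ where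
  toFun x := x.1 i
  map_add' _ _ := rfl
  map_smul' _ _ := rfl

lemma span_v1_vv_le_ker_coord {i : Fin 4} (hi : i ≠ 0) :
    Submodule.span ℂ {v1, vv} ≤ LinearMap.ker (coord (θ := θ) i) := by
  simp [Submodule.span_le, Set.insert_subset_iff, hi]

lemma span_v2_v3_v4_vv_le_ker_coord_zero :
    Submodule.span ℂ {v2, v3, v4, vv} ≤ LinearMap.ker (coord (θ := θ) 0) := by
  simp [Submodule.span_le, Set.insert_subset_iff]

lemma fst_eq_zero_of_mem_inf {x : SwAlg θ}
    (hx : x ∈ Submodule.span ℂ {v1, vv} ⊓ Submodule.span ℂ {v2, v3, v4, vv}) : x.1 = 0 := by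
  funext i
  by_cases hi : i = 0
  · subst hi
    exact span_v2_v3_v4_vv_le_ker_coord_zero hx.2
  · exact span_v1_vv_le_ker_coord hi hx.1

lemma span_v1_vv_sup_span_v2_v3_v4_vv :
    Submodule.span ℂ {v1, vv} ⊔ Submodule.span ℂ {v2, v3, v4, vv} = (⊤ : Submodule ℂ (SwAlg θ)) := by
  refine eq_top_iff.mpr fun x _ => ?_
  rw [eq_sum_coord_smul_basis x]
  have smul_mem_span {s : Set (SwAlg θ)} {w : SwAlg θ} (hw : w ∈ s) (c : ℂ) :
      c • w ∈ Submodule.span ℂ s :=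
    Submodule.smul_mem _ c (Submodule.subset_span hw)
  refine Submodule.add_mem_sup (smul_mem_span (by simp) _) ?_
  refine add_mem (add_mem (add_mem ?_ ?_) ?_) ?_ <;> exact smul_mem_span (by simp) _

end SwAlg

open SwAlg in
theorem swanson_central_sum_general (θ : ℝ) :
    ∀ A : Submodule ℂ (SwAlg θ), A = Submodule.span ℂ {v1, vv} →
    ∀ B : Submodule ℂ (SwAlg θ), B = Submodule.span ℂ {v2, v3, v4, vv} →
      (∀ x : SwAlg θ, ∀ y ∈ A, ⁅x, y⁆ ∈ A) ∧
      (∀ x ∈ B, ∀ y ∈ B, ⁅x, y⁆ ∈ B) ∧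
      A ⊔ B = ⊤ ∧
      (∀ x ∈ A ⊓ B, (∀ y ∈ A, ⁅x, y⁆ = (0 : SwAlg θ)) ∧ (∀ y ∈ B, ⁅x, y⁆ = (0 : SwAlg θ))) := by
  rintro A rfl B rfl
  have hvA : (vv : SwAlg θ) ∈ Submodule.span ℂ {v1, vv} := Submodule.subset_span (by simp)
  have hvB : (vv : SwAlg θ) ∈ Submodule.span ℂ {v2, v3, v4, vv} := Submodule.subset_span (by simp)
  refine ⟨fun x y _ => lie_mem_of_vv_mem hvA x y, fun x _ y _ => lie_mem_of_vv_mem hvB x y,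
    span_v1_vv_sup_span_v2_v3_v4_vv, fun x hx => ?_⟩
  have hcentral := lie_eq_zero_of_fst_eq_zero (fst_eq_zero_of_mem_inf hx)
  exact ⟨fun y _ => hcentral y, fun y _ => hcentral y⟩

open SwAlg in
/-- For `θ ∈ (−π/4, π/4)`, `θ ≠ 0`, `s(θ)` is the central sum of
`A` (the span of `v₁, v`) and `B` (the span of `v₂, v₃, v₄, v`): `A` is an ideal of
`s`, `s = A + B`, `B` is a subalgebra, and every element of `A ⊓ B` is central both in
`A` and in `B`. -/
theorem swanson_central_sum (θ : ℝ) (hθ₁ : -(Real.pi / 4) < θ)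
    (hθ₂ : θ < Real.pi / 4) (hθ₀ : θ ≠ 0) :
    ∀ A : Submodule ℂ (SwAlg θ), A = Submodule.span ℂ {v1, vv} →
    ∀ B : Submodule ℂ (SwAlg θ), B = Submodule.span ℂ {v2, v3, v4, vv} →
      (∀ x : SwAlg θ, ∀ y ∈ A, ⁅x, y⁆ ∈ A) ∧
      (∀ x ∈ B, ∀ y ∈ B, ⁅x, y⁆ ∈ B) ∧
      A ⊔ B = ⊤ ∧
      (∀ x ∈ A ⊓ B, (∀ y ∈ A, ⁅x, y⁆ = (0 : SwAlg θ)) ∧ (∀ y ∈ B, ⁅x, y⁆ = (0 : SwAlg θ))) :=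
  swanson_central_sum_general θ
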